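/- arXiv:1103.5127 — 2 statements merged into one kernel-verified Lean document; each statement's English description precedes it below -/
import Mathlib

section
/- For every odd integer n ≥ 7, the complete graph K_n is opinionated; that is, there exists an edge-friendly binary edge labeling f of K_n such that no vertex is unlabeled under the induced partial vertex labeling f⁺ (equivalently, for every vertex v, |N_0(v)| ≠ |N_1(v)|). -/
/-!
Edge-friendly labelings (Krop, Lee, Raridan).  A binary edge labeling of a
graph `G` is `f : Sym2 V → Fin 2` (only its values on edges matter).  For
`i : Fin 2`, `nbr G f i v` is the set `N_i(v)` of neighbors of `v` joined to
`v` by an `i`-edge, `edgeCount G f i` is `e_f(i)`, and `vertexLabel G f v` is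
the induced partial vertex label `f⁺(v)` (with `none` meaning unlabeled).
-/

open Finset

attribute [local instance] Classical.propDecidable

noncomputable section

namespace EdgeLabeling

variable {V : Type*} [Fintype V]

/-- `N_i(v)`: neighbors of `v` joined to `v` by an edge labeled `i`. -/
def nbr (G : SimpleGraph V) (f : Sym2 V → Fin 2) (i : Fin 2) (v : V) : Finset V :=
  Finset.univ.filter fun u => G.Adj v u ∧ f s(v, u) = i

/-- `e_f(i)`: the number of edges of `G` labeled `i`. -/
def edgeCount (G : SimpleGraph V) (f : Sym2 V → Fin 2) (i : Fin 2) : ℕ :=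
  (G.edgeFinset.filter fun e => f e = i).card

/-- `f` is edge-friendly: `|e_f(0) - e_f(1)| ≤ 1`. -/
def EdgeFriendly (G : SimpleGraph V) (f : Sym2 V → Fin 2) : Prop :=
  |(edgeCount G f 0 : ℤ) - (edgeCount G f 1 : ℤ)| ≤ 1

/-- The induced partial vertex labeling `f⁺`. -/
def vertexLabel (G : SimpleGraph V) (f : Sym2 V → Fin 2) (v : V) : Option (Fin 2) :=
  if (nbr G f 1 v).card < (nbr G f 0 v).card then some 0
  else if (nbr G f 0 v).card < (nbr G f 1 v).card then some 1
  else none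

/-- `v` is unlabeled under the induced partial vertex labeling. -/
def Unlabeled (G : SimpleGraph V) (f : Sym2 V → Fin 2) (v : V) : Prop :=
  vertexLabel G f v = none

/-- `v_f(i)`: the number of vertices labeled `i` by `f⁺`. -/
def vertexCount (G : SimpleGraph V) (f : Sym2 V → Fin 2) (i : Fin 2) : ℕ :=
  (Finset.univ.filter fun v => vertexLabel G f v = some i).card

/-- `G` is opinionated: some edge-friendly labeling leaves no vertex unlabeled. -/
def Opinionated (G : SimpleGraph V) : Prop :=
  ∃ f : Sym2 V → Fin 2, EdgeFriendly G f ∧ ∀ v : V, ¬ Unlabeled G f v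

end EdgeLabeling

open EdgeLabeling

/-!
Join a labelled `K_V` to a new edge `xy`, labelling every edge from `x` by `1` and every edge
from `y` by `0`.  Each old vertex gains one neighbour of each label, so it stays labelled, while
`x` and `y` have all but at most one of their `|V| + 1` edges of the same label, so they are
labelled as soon as `|V| ≥ 2`; the label of `xy` moves `e_f(0) - e_f(1)` by `±1` as we please.
Starting from the all-`1` labelling of `K_3`, whose imbalance is `-3`, two steps reach
imbalance `-1` on `K_7`, and from there on the imbalance can be kept in `{-1, 0, 1}`.
-/

namespace EdgeLabeling

def edgeImbalance {V : Type*} [Fintype V] (G : SimpleGraph V) (f : Sym2 V → Fin 2) : ℤ :=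
  edgeCount G f 0 - edgeCount G f 1

section General

variable {V W : Type*} [Fintype V] [Fintype W]

theorem edgeFriendly_iff {G : SimpleGraph V} {f : Sym2 V → Fin 2} :
    EdgeFriendly G f ↔ |edgeImbalance G f| ≤ 1 :=
  Iff.rfl

@[simp]
theorem mem_nbr {G : SimpleGraph V} {f : Sym2 V → Fin 2} {i : Fin 2} {v u : V} :
    u ∈ nbr G f i v ↔ G.Adj v u ∧ f s(v, u) = i := by
  rw [nbr, mem_filter, and_iff_right (mem_univ u)]

theorem unlabeled_iff {G : SimpleGraph V} {f : Sym2 V → Fin 2} {v : V} :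
    Unlabeled G f v ↔ (nbr G f 0 v).card = (nbr G f 1 v).card := by
  unfold Unlabeled vertexLabel
  split_ifs <;> simp only [false_iff, true_iff] <;> omega

theorem two_mul_edgeCount (G : SimpleGraph V) (f : Sym2 V → Fin 2) (i : Fin 2) :
    2 * edgeCount G f i = ∑ v, (nbr G f i v).card := by
  let H : SimpleGraph V := G.deleteEdges {e | f e ≠ i}
  have hE : H.edgeFinset = G.edgeFinset.filter fun e => f e = i := by
    ext e; simp [H]
  have hdeg : ∀ v, H.degree v = (nbr G f i v).card := by
    intro v
    rw [← SimpleGraph.card_neighborFinset_eq_degree]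
    congr 1; ext u; simp [H]
  rw [edgeCount, ← hE, ← H.sum_degrees_eq_twice_card_edges]
  exact sum_congr rfl fun v _ => hdeg v

theorem card_nbr_top_const (c i : Fin 2) (v : V) :
    (nbr ⊤ (fun _ => c) i v).card = if c = i then Fintype.card V - 1 else 0 := by
  split_ifs with h
  · rw [← card_univ, ← card_erase_of_mem (mem_univ v)]
    congr 1; ext u; simp [h, eq_comm]
  · simp [card_eq_zero, eq_empty_iff_forall_notMem, h]

theorem edgeImbalance_top_const_one :
    edgeImbalance (⊤ : SimpleGraph V) (fun _ => 1) = -(Fintype.card V).choose 2 := by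
  have h0 := two_mul_edgeCount (⊤ : SimpleGraph V) (fun _ => 1) 0
  have h1 := two_mul_edgeCount (⊤ : SimpleGraph V) (fun _ => 1) 1
  simp only [card_nbr_top_const, one_ne_zero, if_true, if_false, sum_const, card_univ,
    smul_eq_mul, mul_zero] at h0 h1
  rw [edgeImbalance, Nat.choose_two_right]
  omega

theorem card_nbr_comp_iso {G : SimpleGraph V} {H : SimpleGraph W} (e : G ≃g H)
    (f : Sym2 W → Fin 2) (i : Fin 2) (v : V) :
    (nbr G (f ∘ Sym2.map e) i v).card = (nbr H f i (e v)).card :=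
  card_equiv e.toEquiv fun u => by simp [e.map_adj_iff]

theorem unlabeled_comp_iso_iff {G : SimpleGraph V} {H : SimpleGraph W} (e : G ≃g H)
    (f : Sym2 W → Fin 2) (v : V) : Unlabeled G (f ∘ Sym2.map e) v ↔ Unlabeled H f (e v) := by
  simp only [unlabeled_iff, card_nbr_comp_iso]

theorem edgeCount_comp_iso {G : SimpleGraph V} {H : SimpleGraph W} (e : G ≃g H)
    (f : Sym2 W → Fin 2) (i : Fin 2) : edgeCount G (f ∘ Sym2.map e) i = edgeCount H f i := by
  have hsum : ∑ v, (nbr G (f ∘ Sym2.map e) i v).card = ∑ w, (nbr H f i w).card := by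
    simp only [card_nbr_comp_iso]
    exact e.toEquiv.sum_comp fun w => (nbr H f i w).card
  have := two_mul_edgeCount G (f ∘ Sym2.map e) i
  have := two_mul_edgeCount H f i
  omega

theorem edgeImbalance_comp_iso {G : SimpleGraph V} {H : SimpleGraph W} (e : G ≃g H)
    (f : Sym2 W → Fin 2) : edgeImbalance G (f ∘ Sym2.map e) = edgeImbalance H f := by
  simp only [edgeImbalance, edgeCount_comp_iso]

end General

section Extension

variable {V : Type*}

/-- The new vertices are `x = none`, joined to `V` by `1`-edges, and `y = some none`, joined to
`V` by `0`-edges; `c` is the label of `xy`. -/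
def extendLabelFun (f : Sym2 V → Fin 2) (c : Fin 2) :
    Option (Option V) → Option (Option V) → Fin 2
  | some (some a), some (some b) => f s(a, b)
  | none, some (some _) | some (some _), none => 1
  | none, some none | some none, none => c
  | _, _ => 0

theorem extendLabelFun_comm (f : Sym2 V → Fin 2) (c : Fin 2) (x y : Option (Option V)) :
    extendLabelFun f c x y = extendLabelFun f c y x := by
  rcases x with _ | _ | a <;> rcases y with _ | _ | b <;> simp [extendLabelFun, Sym2.eq_swap]

def extendLabel (f : Sym2 V → Fin 2) (c : Fin 2) : Sym2 (Option (Option V)) → Fin 2 :=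
  Sym2.lift ⟨extendLabelFun f c, extendLabelFun_comm f c⟩

variable [Fintype V]

theorem card_nbr_extendLabel_some_some (f : Sym2 V → Fin 2) (c i : Fin 2) (a : V) :
    (nbr ⊤ (extendLabel f c) i (some (some a))).card = (nbr ⊤ f i a).card + 1 := by
  simp only [nbr, card_filter, Fintype.sum_option]
  fin_cases i <;> simp [extendLabel, extendLabelFun, add_comm]

theorem card_nbr_extendLabel_none (f : Sym2 V → Fin 2) (c i : Fin 2) :
    (nbr ⊤ (extendLabel f c) i none).card =
      (if i = 1 then Fintype.card V else 0) + if c = i then 1 else 0 := by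
  simp only [nbr, card_filter, Fintype.sum_option]
  fin_cases i <;> simp [extendLabel, extendLabelFun, add_comm]

theorem card_nbr_extendLabel_some_none (f : Sym2 V → Fin 2) (c i : Fin 2) :
    (nbr ⊤ (extendLabel f c) i (some none)).card =
      (if i = 0 then Fintype.card V else 0) + if c = i then 1 else 0 := by
  simp only [nbr, card_filter, Fintype.sum_option]
  fin_cases i <;> simp [extendLabel, extendLabelFun, add_comm]

theorem not_unlabeled_extendLabel {f : Sym2 V → Fin 2} (hV : 2 ≤ Fintype.card V)
    (hf : ∀ a, ¬ Unlabeled ⊤ f a) (c : Fin 2) (x : Option (Option V)) :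
    ¬ Unlabeled ⊤ (extendLabel f c) x := by
  rcases x with _ | _ | a
  · rw [unlabeled_iff, card_nbr_extendLabel_none, card_nbr_extendLabel_none]
    fin_cases c <;> simp only [Fin.zero_eta, Fin.mk_one, zero_ne_one, one_ne_zero, if_true,
      if_false] <;> omega
  · rw [unlabeled_iff, card_nbr_extendLabel_some_none, card_nbr_extendLabel_some_none]
    fin_cases c <;> simp only [Fin.zero_eta, Fin.mk_one, zero_ne_one, one_ne_zero, if_true,
      if_false] <;> omega
  · simpa [unlabeled_iff, card_nbr_extendLabel_some_some] using hf a

theorem edgeCount_extendLabel (f : Sym2 V → Fin 2) (c i : Fin 2) :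
    edgeCount ⊤ (extendLabel f c) i =
      edgeCount ⊤ f i + Fintype.card V + if c = i then 1 else 0 := by
  have h := two_mul_edgeCount ⊤ (extendLabel f c) i
  rw [Fintype.sum_option, Fintype.sum_option, card_nbr_extendLabel_none,
    card_nbr_extendLabel_some_none] at h
  simp only [card_nbr_extendLabel_some_some, sum_add_distrib, ← two_mul_edgeCount ⊤ f,
    sum_const, card_univ, smul_eq_mul, mul_one] at h
  fin_cases i <;>
    simp only [Fin.zero_eta, Fin.mk_one, zero_ne_one, one_ne_zero, if_true, if_false, zero_add]
      at h ⊢ <;>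
    split_ifs at h ⊢ <;> omega

theorem edgeImbalance_extendLabel (f : Sym2 V → Fin 2) (c : Fin 2) :
    edgeImbalance ⊤ (extendLabel f c) = edgeImbalance ⊤ f + if c = 0 then 1 else -1 := by
  simp only [edgeImbalance, edgeCount_extendLabel]
  fin_cases c <;>
    simp only [Fin.zero_eta, Fin.mk_one, zero_ne_one, one_ne_zero, if_true, if_false, add_zero,
      Nat.cast_add, Nat.cast_one] <;>
    ring

end Extension

theorem exists_labeling_top_of_card_eq_add_two {V W : Type*} [Fintype V] [Fintype W]
    (hV : 2 ≤ Fintype.card V) (hW : Fintype.card W = Fintype.card V + 2)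
    {f : Sym2 V → Fin 2} (hf : ∀ v, ¬ Unlabeled ⊤ f v) (c : Fin 2) :
    ∃ g : Sym2 W → Fin 2, (∀ w, ¬ Unlabeled ⊤ g w) ∧
      edgeImbalance ⊤ g = edgeImbalance ⊤ f + if c = 0 then 1 else -1 := by
  let e : W ≃ Option (Option V) := Fintype.equivOfCardEq (by simpa using hW)
  refine ⟨extendLabel f c ∘ Sym2.map (SimpleGraph.Iso.completeGraph e), fun w => ?_, ?_⟩
  · rw [unlabeled_comp_iso_iff]
    exact not_unlabeled_extendLabel hV hf c _
  · rw [edgeImbalance_comp_iso, edgeImbalance_extendLabel]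

theorem exists_labeling_top_fin_odd (k : ℕ) :
    ∃ f : Sym2 (Fin (2 * k + 3)) → Fin 2, (∀ v, ¬ Unlabeled ⊤ f v) ∧
      |edgeImbalance ⊤ f| ≤ max 1 (3 - k : ℤ) := by
  induction k with
  | zero =>
    refine ⟨fun _ => 1, fun v => ?_, ?_⟩
    · simp [unlabeled_iff, card_nbr_top_const]
    · rw [edgeImbalance_top_const_one]
      norm_num [Nat.choose_two_right]
  | succ k ih =>
    obtain ⟨f, hf, hbound⟩ := ih
    obtain ⟨g, hg, hgf⟩ := exists_labeling_top_of_card_eq_add_two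
      (W := Fin (2 * (k + 1) + 3)) (by simp) (by simp only [Fintype.card_fin]; ring) hf
      (if 0 < edgeImbalance ⊤ f then 1 else 0)
    refine ⟨g, hg, ?_⟩
    rw [hgf, abs_le]
    rw [abs_le] at hbound
    by_cases hpos : 0 < edgeImbalance ⊤ f
    · simp only [hpos, if_true, one_ne_zero, if_false]
      omega
    · simp only [hpos, if_false, if_true]
      omega

end EdgeLabeling

/-- For every odd `n ≥ 7`, the complete graph `K_n` is
opinionated: some edge-friendly labeling leaves no vertex unlabeled. -/
theorem completeGraph_opinionated (n : ℕ) (hn : 7 ≤ n) (hodd : Odd n) :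
    ∃ f : Sym2 (Fin n) → Fin 2, EdgeFriendly (⊤ : SimpleGraph (Fin n)) f ∧
      ∀ v : Fin n, ¬ Unlabeled (⊤ : SimpleGraph (Fin n)) f v := by
  obtain ⟨k, rfl⟩ : ∃ k, n = 2 * k + 3 := by
    obtain ⟨j, rfl⟩ := hodd
    exact ⟨j - 1, by omega⟩
  obtain ⟨f, hf, hbound⟩ := exists_labeling_top_fin_odd k
  exact ⟨f, edgeFriendly_iff.mpr (hbound.trans (max_le le_rfl (by omega))), hf⟩
end
end

section
/- Let n ≥ 9 be an integer with n ≡ 1 (mod 4), let f be an edge-friendly binary edge labeling of the complete graph K_n, and let v be a vertex that is unlabeled under the induced partial vertex labeling. If every vertex of N_0(v) has at most one 0-edge to a vertex of N_1(v), then there is at least one 0-edge joining two vertices of N_1(v); indeed, the number of 0-edges with both endpoints in N_1(v) is at least C(n,2)/2 − C((n−1)/2, 2) − (n−1)/2 − (n−1)/2 ≥ 1. -/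
/-!
Edge-friendly labelings (Krop, Lee, Raridan).  A binary edge labeling of a
graph `G` is `f : Sym2 V → Fin 2` (only its values on edges matter).  For
`i : Fin 2`, `nbr G f i v` is the set `N_i(v)` of neighbors of `v` joined to
`v` by an `i`-edge, `edgeCount G f i` is `e_f(i)`, and `vertexLabel G f v` is
the induced partial vertex label `f⁺(v)` (with `none` meaning unlabeled).
-/

open Finset

attribute [local instance] Classical.propDecidable

noncomputable section

open EdgeLabeling

namespace EdgeLabeling

variable {V : Type*} [Fintype V]

/-- The number of edges of `G` labeled `i` with both endpoints in `S`. -/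
def edgesWithin (G : SimpleGraph V) (f : Sym2 V → Fin 2) (i : Fin 2)
    (S : Finset V) : ℕ :=
  (G.edgeFinset.filter fun e => f e = i ∧ ∃ x ∈ S, ∃ y ∈ S, e = s(x, y)).card

/-- The number of edges of `G` labeled `i` with one endpoint in `S` and the
other in `T`. -/
def edgesBetween (G : SimpleGraph V) (f : Sym2 V → Fin 2) (i : Fin 2)
    (S T : Finset V) : ℕ :=
  (G.edgeFinset.filter fun e => f e = i ∧ ∃ x ∈ S, ∃ y ∈ T, e = s(x, y)).card

/-- The number of edges of `G` labeled `i` incident with the vertex `v`. -/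
def edgesIncident (G : SimpleGraph V) (f : Sym2 V → Fin 2) (i : Fin 2)
    (v : V) : ℕ :=
  (G.edgeFinset.filter fun e => f e = i ∧ v ∈ e).card

end EdgeLabeling

/-!
Every `0`-edge of `K_n` meets `v`, lies inside `N_0(v)`, joins `N_0(v)` to `N_1(v)`, or lies
inside `N_1(v)`. As `v` is unlabeled, `|N_0(v)| = |N_1(v)| = (n-1)/2`, so the first three classes
contain at most `(n-1)/2`, `C((n-1)/2, 2)` and (by hypothesis) `(n-1)/2` edges, while
edge-friendliness forces at least `C(n,2)/2` edges labeled `0`.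
-/

lemma fin_two_ne_zero_iff_eq_one {i : Fin 2} : i ≠ 0 ↔ i = 1 := by omega

namespace EdgeLabeling

variable {V : Type*} [Fintype V] {G : SimpleGraph V} {f : Sym2 V → Fin 2}

lemma edgeCount_zero_add_edgeCount_one (G : SimpleGraph V) (f : Sym2 V → Fin 2) :
    edgeCount G f 0 + edgeCount G f 1 = #G.edgeFinset := by
  simp only [edgeCount, ← fin_two_ne_zero_iff_eq_one]
  exact card_filter_add_card_filter_not _

lemma EdgeFriendly.card_edgeFinset_div_two_le (hf : EdgeFriendly G f) (i : Fin 2) :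
    #G.edgeFinset / 2 ≤ edgeCount G f i := by
  have hsum := edgeCount_zero_add_edgeCount_one G f
  rw [EdgeFriendly, abs_le] at hf
  fin_cases i <;> simp <;> omega

lemma card_nbr_zero_add_card_nbr_one (G : SimpleGraph V) (f : Sym2 V → Fin 2) (v : V) :
    #(nbr G f 0 v) + #(nbr G f 1 v) = G.degree v := by
  simp only [nbr, ← fin_two_ne_zero_iff_eq_one, ← filter_filter,
    ← G.card_neighborFinset_eq_degree, G.neighborFinset_eq_filter]
  exact card_filter_add_card_filter_not _

lemma mem_nbr_zero_or_mem_nbr_one {v u : V} (h : G.Adj v u) :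
    u ∈ nbr G f 0 v ∨ u ∈ nbr G f 1 v := by
  simp only [nbr, mem_filter, mem_univ, true_and, h]
  omega

lemma Unlabeled.card_nbr_zero_eq {v : V} (hv : Unlabeled G f v) :
    #(nbr G f 0 v) = #(nbr G f 1 v) := by
  unfold Unlabeled vertexLabel at hv
  split_ifs at hv
  omega

lemma edgesIncident_eq_card_nbr (i : Fin 2) (v : V) :
    edgesIncident G f i v = #(nbr G f i v) := by
  symm
  refine card_bij (fun u _ => s(v, u)) ?_ ?_ ?_
  · intro u hu
    simp only [nbr, mem_filter, mem_univ, true_and] at hu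
    simp [hu]
  · intro u₁ _ u₂ _ h
    exact Sym2.congr_right.mp h
  · intro e he
    simp only [mem_filter, SimpleGraph.mem_edgeFinset] at he
    obtain ⟨he, hfe, hve⟩ := he
    obtain ⟨u, rfl⟩ := Sym2.mem_iff_exists.mp hve
    exact ⟨u, by simpa [nbr] using ⟨he, hfe⟩, rfl⟩

lemma edgesWithin_le_choose_two (i : Fin 2) (S : Finset V) :
    edgesWithin G f i S ≤ (#S).choose 2 := by
  rw [edgesWithin, ← Sym2.card_image_offDiag]
  refine card_le_card fun e he => ?_
  simp only [mem_filter, SimpleGraph.mem_edgeFinset] at he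
  obtain ⟨hadj, -, x, hx, y, hy, rfl⟩ := he
  exact mem_image.mpr ⟨(x, y), mem_offDiag.mpr ⟨hx, hy, G.ne_of_adj hadj⟩, rfl⟩

lemma edgesBetween_le_card_mul {i : Fin 2} {S T : Finset V} {d : ℕ}
    (h : ∀ u ∈ S, #(T.filter fun w => f s(u, w) = i) ≤ d) :
    edgesBetween G f i S T ≤ #S * d := by
  have hsub : (G.edgeFinset.filter fun e => f e = i ∧ ∃ x ∈ S, ∃ y ∈ T, e = s(x, y)) ⊆
      S.biUnion fun u => (T.filter fun w => f s(u, w) = i).image fun w => s(u, w) := by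
    intro e he
    simp only [mem_filter] at he
    obtain ⟨-, hfe, x, hx, y, hy, rfl⟩ := he
    exact mem_biUnion.mpr ⟨x, hx, mem_image.mpr ⟨y, mem_filter.mpr ⟨hy, hfe⟩, rfl⟩⟩
  calc edgesBetween G f i S T ≤ _ := card_le_card hsub
    _ ≤ ∑ u ∈ S, #((T.filter fun w => f s(u, w) = i).image fun w => s(u, w)) :=
      card_biUnion_le
    _ ≤ ∑ u ∈ S, d := sum_le_sum fun u hu => card_image_le.trans (h u hu)
    _ = #S * d := by rw [sum_const, smul_eq_mul]

lemma edgeCount_le_of_cover {v : V} {S T : Finset V}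
    (hcover : ∀ u, u ≠ v → u ∈ S ∨ u ∈ T) (i : Fin 2) :
    edgeCount G f i ≤ edgesIncident G f i v + edgesWithin G f i S +
      edgesBetween G f i S T + edgesWithin G f i T := by
  have hsub : G.edgeFinset.filter (fun e => f e = i) ⊆
      (G.edgeFinset.filter fun e => f e = i ∧ v ∈ e) ∪
        (G.edgeFinset.filter fun e => f e = i ∧ ∃ x ∈ S, ∃ y ∈ S, e = s(x, y)) ∪
        (G.edgeFinset.filter fun e => f e = i ∧ ∃ x ∈ S, ∃ y ∈ T, e = s(x, y)) ∪
        (G.edgeFinset.filter fun e => f e = i ∧ ∃ x ∈ T, ∃ y ∈ T, e = s(x, y)) := by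
    intro e he
    induction e using Sym2.ind with
    | _ x y =>
      simp only [mem_union, mem_filter] at he ⊢
      obtain ⟨he, hfe⟩ := he
      by_cases hx : x = v
      · exact Or.inl (Or.inl (Or.inl ⟨he, hfe, hx ▸ Sym2.mem_mk_left x y⟩))
      by_cases hy : y = v
      · exact Or.inl (Or.inl (Or.inl ⟨he, hfe, hy ▸ Sym2.mem_mk_right x y⟩))
      rcases hcover x hx with hxS | hxT <;> rcases hcover y hy with hyS | hyT
      · exact Or.inl (Or.inl (Or.inr ⟨he, hfe, x, hxS, y, hyS, rfl⟩))
      · exact Or.inl (Or.inr ⟨he, hfe, x, hxS, y, hyT, rfl⟩)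
      · exact Or.inl (Or.inr ⟨he, hfe, y, hyS, x, hxT, Sym2.eq_swap⟩)
      · exact Or.inr ⟨he, hfe, x, hxT, y, hyT, rfl⟩
  grw [edgeCount, card_le_card hsub, card_union_le, card_union_le, card_union_le]
  rfl

end EdgeLabeling

lemma one_le_choose_two_div_two_sub_of_mod_four_eq_one (n : ℕ) (hn : 9 ≤ n) (hmod : n % 4 = 1) :
    1 ≤ n.choose 2 / 2 - ((n - 1) / 2).choose 2 - (n - 1) / 2 - (n - 1) / 2 := by
  obtain ⟨m, rfl⟩ : ∃ m, n = 4 * m + 5 := ⟨n / 4 - 1, by omega⟩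
  have hhalf : (4 * m + 5 - 1) / 2 = 2 * m + 2 := by omega
  have hn2 : (4 * m + 5).choose 2 = 2 * (4 * (m * m) + 9 * m + 5) := by
    rw [Nat.choose_two_right, Nat.add_sub_assoc (by norm_num),
      show (4 * m + 5) * (4 * m + 4) = 2 * (2 * (4 * (m * m) + 9 * m + 5)) by ring,
      Nat.mul_div_cancel_left _ two_pos]
  have hk2 : (2 * m + 2).choose 2 = 2 * (m * m) + 3 * m + 1 := by
    rw [Nat.choose_two_right, Nat.add_sub_assoc (by norm_num),
      show (2 * m + 2) * (2 * m + 1) = 2 * (2 * (m * m) + 3 * m + 1) by ring,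
      Nat.mul_div_cancel_left _ two_pos]
  rw [hhalf, hn2, hk2]
  omega

/-- For `n ≥ 9` with `n ≡ 1 (mod 4)`, if `f` is an
edge-friendly labeling of `K_n`, `v` is unlabeled, and every vertex of
`N_0(v)` has at most one `0`-edge to `N_1(v)`, then the number of `0`-edges
inside `N_1(v)` is at least
`C(n,2)/2 - C((n-1)/2, 2) - (n-1)/2 - (n-1)/2 ≥ 1`. -/
theorem zero_edges_in_N1_mod_one (n : ℕ) (hn : 9 ≤ n) (hmod : n % 4 = 1)
    (f : Sym2 (Fin n) → Fin 2) (hf : EdgeFriendly (⊤ : SimpleGraph (Fin n)) f)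
    (v : Fin n) (hv : Unlabeled (⊤ : SimpleGraph (Fin n)) f v)
    (hfew : ∀ u ∈ nbr (⊤ : SimpleGraph (Fin n)) f 0 v,
      ((nbr (⊤ : SimpleGraph (Fin n)) f 1 v).filter
        fun w => f s(u, w) = 0).card ≤ 1) :
    1 ≤ n.choose 2 / 2 - ((n - 1) / 2).choose 2 - (n - 1) / 2 - (n - 1) / 2 ∧
      n.choose 2 / 2 - ((n - 1) / 2).choose 2 - (n - 1) / 2 - (n - 1) / 2 ≤
        edgesWithin (⊤ : SimpleGraph (Fin n)) f 0
          (nbr (⊤ : SimpleGraph (Fin n)) f 1 v) := by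
  refine ⟨one_le_choose_two_div_two_sub_of_mod_four_eq_one n hn hmod, ?_⟩
  set A := nbr (⊤ : SimpleGraph (Fin n)) f 0 v
  set B := nbr (⊤ : SimpleGraph (Fin n)) f 1 v
  -- `convert` reconciles the classical `Fintype` instances of the definitions with the library's
  have hdeg : #A + #B = n - 1 := by
    rw [card_nbr_zero_add_card_nbr_one]
    convert SimpleGraph.complete_graph_degree v
    simp
  have hAB : #A = #B := hv.card_nbr_zero_eq
  have hA : #A = (n - 1) / 2 := by omega
  have hcount : n.choose 2 / 2 ≤ edgeCount (⊤ : SimpleGraph (Fin n)) f 0 := by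
    convert hf.card_edgeFinset_div_two_le 0
    convert (SimpleGraph.card_edgeFinset_top_eq_card_choose_two (V := Fin n)).symm
    simp
  have hsplit := edgeCount_le_of_cover (G := ⊤) (f := f) (S := A) (T := B)
    (fun u hu => mem_nbr_zero_or_mem_nbr_one hu.symm) 0
  have hincident : edgesIncident (⊤ : SimpleGraph (Fin n)) f 0 v = #A :=
    edgesIncident_eq_card_nbr 0 v
  have hwithin := edgesWithin_le_choose_two (G := ⊤) (f := f) 0 A
  have hbetween := edgesBetween_le_card_mul (G := ⊤) hfew
  rw [hA] at hwithin hbetween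
  omega
end
end
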